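/- Assume that all local matching indicators are nonnegative: I^p_k(i) ≥ 0 for all 1 ≤ k ≤ N−1 and 1 ≤ i ≤ N−k, and I^q_k(i') ≥ 0 for all 1 ≤ k ≤ N−2 and 1 ≤ i' ≤ N−k−1. Then the identity permutation is optimal: C(id) ≤ C(σ) for every permutation σ of {1, ..., N}, i.e. matching each p_i with q_i minimizes the transport cost. -/

import Mathlib

open Finset

/-!
Exchanging the partners of two crossing arcs produces a nested or a disjoint pair of arcs; by
concavity (nested) or monotonicity (disjoint) of `g` this does not increase the cost, while an
integer potential of the arc lengths strictly decreases. Hence every matching costs at least as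
much as some non-crossing one.

A non-crossing matching of a block `p a < q a < ⋯ < q b` either joins `p a` to `q b`, enclosing a
block `q a < p (a + 1) < ⋯ < p b`, or splits into two shorter blocks; dually a block starting
with `q a` decomposes along the arc at `q a`. The indicators `I^p` and `I^q` are exactly the
inequalities needed to compare the enclosing arc with the diagonal matching, and induction on the
block length shows that the diagonal matching beats every non-crossing one.
-/

theorem Set.BijOn.of_union_left {α β : Type*} {f : α → β} {s₁ s₂ : Set α} {t₁ t₂ : Set β}
    (h : Set.BijOn f (s₁ ∪ s₂) (t₁ ∪ t₂)) (h₁ : Set.MapsTo f s₁ t₁) (h₂ : Set.MapsTo f s₂ t₂)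
    (ht : Disjoint t₁ t₂) : Set.BijOn f s₁ t₁ := by
  refine ⟨h₁, h.injOn.mono Set.subset_union_left, fun y hy => ?_⟩
  obtain ⟨x, hx | hx, rfl⟩ := h.surjOn (Or.inl hy)
  · exact ⟨x, hx, rfl⟩
  · exact absurd (h₂ hx) (Set.disjoint_left.1 ht hy)

theorem Set.BijOn.of_union_right {α β : Type*} {f : α → β} {s₁ s₂ : Set α} {t₁ t₂ : Set β}
    (h : Set.BijOn f (s₁ ∪ s₂) (t₁ ∪ t₂)) (h₁ : Set.MapsTo f s₁ t₁) (h₂ : Set.MapsTo f s₂ t₂)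
    (ht : Disjoint t₁ t₂) : Set.BijOn f s₂ t₂ := by
  rw [Set.union_comm s₁, Set.union_comm t₁] at h
  exact h.of_union_left h₂ h₁ ht.symm

theorem Finset.sum_comp_swap_add {ι κ M : Type*} [DecidableEq ι] [AddCommMonoid M]
    {D : Finset ι} {i j : ι} (hi : i ∈ D) (hj : j ∈ D) (hij : i ≠ j) (f : ι → κ → M)
    (σ : ι → κ) :
    ∑ k ∈ D, f k (σ (Equiv.swap i j k)) + (f i (σ i) + f j (σ j)) =
      ∑ k ∈ D, f k (σ k) + (f i (σ j) + f j (σ i)) := by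
  have hj' : j ∈ D.erase i := mem_erase.2 ⟨hij.symm, hj⟩
  rw [← add_sum_erase D _ hi, ← add_sum_erase _ _ hj', ← add_sum_erase D _ hi,
    ← add_sum_erase _ _ hj', Equiv.swap_apply_left, Equiv.swap_apply_right,
    sum_congr rfl fun k hk => by
      rw [Equiv.swap_apply_of_ne_of_ne (ne_of_mem_erase (mem_of_mem_erase hk))
        (ne_of_mem_erase hk)]]
  abel

theorem Finset.sum_range_add_eq_sum_Ico {M : Type*} [AddCommMonoid M] (f : ℕ → M) (a n : ℕ) :
    ∑ l ∈ range n, f (a + l) = ∑ i ∈ Ico a (a + n), f i := by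
  rw [sum_Ico_eq_sum_range, Nat.add_sub_cancel_left]

theorem ConcaveOn.add_le_add_of_add_eq {s : Set ℝ} {f : ℝ → ℝ} (hf : ConcaveOn ℝ s f)
    {a b c d : ℝ} (ha : a ∈ s) (hd : d ∈ s) (hab : a ≤ b) (hbd : b ≤ d) (h : a + d = b + c) :
    f a + f d ≤ f b + f c := by
  rcases hab.eq_or_lt with rfl | hab
  · rw [show c = d by linarith]
  set t := (d - b) / (d - a)
  have hda : 0 < d - a := by linarith
  have ht₀ : 0 ≤ t := div_nonneg (by linarith) hda.le
  have ht₁ : 0 ≤ 1 - t := by rw [sub_nonneg, div_le_one hda]; linarith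
  have hb : t • a + (1 - t) • d = b := by simp only [smul_eq_mul, t]; field_simp; ring
  have hc : (1 - t) • a + t • d = c := by
    rw [show c = a + d - b by linarith]; simp only [smul_eq_mul, t]; field_simp; ring
  have h₁ := hf.2 ha hd ht₀ ht₁ (by ring)
  have h₂ := hf.2 ha hd ht₁ ht₀ (by ring)
  rw [hb] at h₁
  rw [hc] at h₂
  simp only [smul_eq_mul] at h₁ h₂
  linarith

def Interleaved {α : Type*} [LinearOrder α] (a b c d : α) : Prop :=
  min a b < min c d ∧ min c d < max a b ∧ max a b < max c d

theorem Interleaved.map {α β : Type*} [LinearOrder α] [LinearOrder β] {f : α → β} {S : Set α}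
    (hf : StrictMonoOn f S) {a b c d : α} (ha : a ∈ S) (hb : b ∈ S) (hc : c ∈ S) (hd : d ∈ S)
    (h : Interleaved a b c d) : Interleaved (f a) (f b) (f c) (f d) := by
  have hmin : ∀ {x y}, x ∈ S → y ∈ S → min (f x) (f y) = f (min x y) :=
    fun hx hy => (hf.monotoneOn.map_min hx hy).symm
  have hmax : ∀ {x y}, x ∈ S → y ∈ S → max (f x) (f y) = f (max x y) :=
    fun hx hy => (hf.monotoneOn.map_max hx hy).symm
  have hmem : ∀ {x y}, x ∈ S → y ∈ S → min x y ∈ S ∧ max x y ∈ S := fun {x y} hx hy => by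
    constructor
    · rcases min_choice x y with h | h <;> rw [h] <;> assumption
    · rcases max_choice x y with h | h <;> rw [h] <;> assumption
  obtain ⟨h₁, h₂, h₃⟩ := h
  simp only [Interleaved, hmin ha hb, hmin hc hd, hmax ha hb, hmax hc hd]
  exact ⟨hf (hmem ha hb).1 (hmem hc hd).1 h₁, hf (hmem hc hd).1 (hmem ha hb).2 h₂,
    hf (hmem ha hb).2 (hmem hc hd).2 h₃⟩

/-- Exchanging partners turns two interleaved pairs `{u₁, v₁}`, `{u₂, v₂}` into two nested or two
disjoint pairs. -/
theorem Interleaved.exchange {β α : Type*} [AddCommGroup β] [LinearOrder β]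
    [IsOrderedAddMonoid β] [AddCommMonoid α] (r : α → α → Prop) (h : β → α) {S : Set β}
    (hnest : ∀ y₁ y₂ y₃ y₄, y₁ ∈ S → y₄ ∈ S → y₁ < y₂ → y₂ < y₃ → y₃ < y₄ →
      r (h (y₄ - y₁) + h (y₃ - y₂)) (h (y₃ - y₁) + h (y₄ - y₂)))
    (hdisj : ∀ y₁ y₂ y₃ y₄, y₁ ∈ S → y₄ ∈ S → y₁ < y₂ → y₂ < y₃ → y₃ < y₄ →
      r (h (y₂ - y₁) + h (y₄ - y₃)) (h (y₃ - y₁) + h (y₄ - y₂)))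
    {u₁ v₁ u₂ v₂ : β} (hu₁ : u₁ ∈ S) (hv₁ : v₁ ∈ S) (hu₂ : u₂ ∈ S) (hv₂ : v₂ ∈ S)
    (hI : Interleaved u₁ v₁ u₂ v₂) :
    r (h |u₁ - v₂| + h |u₂ - v₁|) (h |u₁ - v₁| + h |u₂ - v₂|) := by
  have gap : ∀ {x y : β}, x < y → |x - y| = y - x ∧ |y - x| = y - x := fun hxy =>
    ⟨by rw [abs_sub_comm, abs_of_pos (sub_pos.2 hxy)], abs_of_pos (sub_pos.2 hxy)⟩
  obtain ⟨h₁, h₂, h₃⟩ := hI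
  rcases le_total u₁ v₁ with h₁₁ | h₁₁ <;> rcases le_total u₂ v₂ with h₂₂ | h₂₂ <;>
    simp only [min_eq_left, min_eq_right, max_eq_left, max_eq_right, h₁₁, h₂₂] at h₁ h₂ h₃
  · rw [(gap (h₁.trans (h₂.trans h₃))).1, (gap h₂).1, (gap (h₁.trans h₂)).1,
      (gap (h₂.trans h₃)).1]
    exact hnest _ _ _ _ hu₁ hv₂ h₁ h₂ h₃
  · rw [(gap h₁).1, (gap h₃).2, (gap (h₁.trans h₂)).1, (gap (h₂.trans h₃)).2]
    exact hdisj _ _ _ _ hu₁ hu₂ h₁ h₂ h₃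
  · rw [(gap h₃).1, (gap h₁).2, (gap (h₁.trans h₂)).2, (gap (h₂.trans h₃)).1, add_comm (h _)]
    exact hdisj _ _ _ _ hv₁ hv₂ h₁ h₂ h₃
  · rw [(gap h₂).2, (gap (h₁.trans (h₂.trans h₃))).2, (gap (h₁.trans h₂)).2,
      (gap (h₂.trans h₃)).2, add_comm (h _)]
    exact hnest _ _ _ _ hv₁ hu₂ h₁ h₂ h₃

theorem Interleaved.exchange_le {g : ℝ → ℝ} (hg : ConcaveOn ℝ (Set.Ici 0) g)
    (hmono : MonotoneOn g (Set.Ici 0)) {u₁ v₁ u₂ v₂ : ℝ} (hI : Interleaved u₁ v₁ u₂ v₂) :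
    g |u₁ - v₂| + g |u₂ - v₁| ≤ g |u₁ - v₁| + g |u₂ - v₂| := by
  refine hI.exchange (· ≤ ·) g (S := Set.univ) (fun y₁ y₂ y₃ y₄ _ _ h₁ h₂ h₃ => ?_)
    (fun y₁ y₂ y₃ y₄ _ _ h₁ h₂ h₃ => ?_) trivial trivial trivial trivial
  · rw [add_comm (g _)]
    exact hg.add_le_add_of_add_eq (Set.mem_Ici.2 (by linarith)) (Set.mem_Ici.2 (by linarith))
      (by linarith) (by linarith) (by ring)
  · exact add_le_add (hmono (Set.mem_Ici.2 (by linarith)) (Set.mem_Ici.2 (by linarith))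
      (by linarith)) (hmono (Set.mem_Ici.2 (by linarith)) (Set.mem_Ici.2 (by linarith))
      (by linarith))

def gapWeight (M l : ℤ) : ℤ := l * (M - l)

theorem Interleaved.exchange_gapWeight_lt {M u₁ v₁ u₂ v₂ : ℤ} (hu₁ : u₁ ∈ Set.Ico 0 M)
    (hv₁ : v₁ ∈ Set.Ico 0 M) (hu₂ : u₂ ∈ Set.Ico 0 M) (hv₂ : v₂ ∈ Set.Ico 0 M)
    (hI : Interleaved u₁ v₁ u₂ v₂) :
    gapWeight M |u₁ - v₂| + gapWeight M |u₂ - v₁| <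
      gapWeight M |u₁ - v₁| + gapWeight M |u₂ - v₂| := by
  refine hI.exchange (· < ·) (gapWeight M) (fun y₁ y₂ y₃ y₄ _ _ h₁ h₂ h₃ => ?_)
    (fun y₁ y₂ y₃ y₄ h₁ h₄ h₁₂ h₂₃ h₃₄ => ?_) hu₁ hv₁ hu₂ hv₂
  · simp only [gapWeight]
    nlinarith [mul_pos (sub_pos.2 h₁) (sub_pos.2 h₃)]
  · simp only [gapWeight]
    nlinarith [mul_pos (sub_pos.2 h₂₃) (show 0 < M - (y₄ - y₁) by linarith [h₁.1, h₄.2])]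

def chainPoint (p q : ℕ → ℝ) (e : ℕ) : ℝ := if e % 2 = 0 then p (e / 2) else q (e / 2)

@[simp] theorem chainPoint_two_mul (p q : ℕ → ℝ) (i : ℕ) : chainPoint p q (2 * i) = p i := by
  simp [chainPoint]

@[simp] theorem chainPoint_two_mul_add_one (p q : ℕ → ℝ) (i : ℕ) :
    chainPoint p q (2 * i + 1) = q i := by
  simp [chainPoint, Nat.mul_add_div]

theorem strictMonoOn_chainPoint {N : ℕ} {p q : ℕ → ℝ} (hpq : ∀ i, 1 ≤ i → i ≤ N → p i < q i)
    (hqp : ∀ i, 1 ≤ i → i < N → q i < p (i + 1)) :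
    StrictMonoOn (chainPoint p q) (Set.Icc 2 (2 * N + 1)) := by
  refine strictMonoOn_of_lt_add_one Set.ordConnected_Icc fun e _ he he' => ?_
  simp only [Set.mem_Icc] at he he'
  obtain ⟨k, rfl | rfl⟩ := Nat.even_or_odd' e
  · simpa using hpq k (by omega) (by omega)
  · rw [chainPoint_two_mul_add_one, show 2 * k + 1 + 1 = 2 * (k + 1) by ring, chainPoint_two_mul]
    exact hqp k (by omega) (by omega)

/-- With `p i` numbered `2 i` and `q i` numbered `2 i + 1`, the arc `p i — q s` starts to the left
of the arc `p j — q t` and the two cross. -/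
def Crosses (i s j t : ℕ) : Prop := Interleaved (2 * i) (2 * s + 1) (2 * j) (2 * t + 1)

def NonCrossing (σ : ℕ → ℕ) (D : Set ℕ) : Prop := ∀ i ∈ D, ∀ j ∈ D, ¬ Crosses i (σ i) j (σ j)

theorem NonCrossing.mono {σ : ℕ → ℕ} {D D' : Set ℕ} (h : NonCrossing σ D) (hD : D' ⊆ D) :
    NonCrossing σ D' := fun i hi j hj => h i (hD hi) j (hD hj)

theorem Crosses.cost_exchange_le {N : ℕ} {p q : ℕ → ℝ} {g : ℝ → ℝ}
    (hpq : ∀ i, 1 ≤ i → i ≤ N → p i < q i) (hqp : ∀ i, 1 ≤ i → i < N → q i < p (i + 1))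
    (hg : ConcaveOn ℝ (Set.Ici 0) g) (hmono : MonotoneOn g (Set.Ici 0))
    {i s j t : ℕ} (hi : i ∈ Set.Icc 1 N) (hs : s ∈ Set.Icc 1 N) (hj : j ∈ Set.Icc 1 N)
    (ht : t ∈ Set.Icc 1 N) (h : Crosses i s j t) :
    g |p i - q t| + g |p j - q s| ≤ g |p i - q s| + g |p j - q t| := by
  simp only [Set.mem_Icc] at hi hs hj ht
  have hI := h.map (strictMonoOn_chainPoint hpq hqp) (by simp; omega) (by simp; omega)
    (by simp; omega) (by simp; omega)
  simp only [chainPoint_two_mul, chainPoint_two_mul_add_one] at hI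
  exact hI.exchange_le hg hmono

def arcPotential (N i s : ℕ) : ℤ := gapWeight (2 * N + 2) |2 * i - (2 * s + 1 : ℤ)|

theorem Crosses.arcPotential_exchange_lt {N i s j t : ℕ} (hi : i ∈ Set.Icc 1 N)
    (hs : s ∈ Set.Icc 1 N) (hj : j ∈ Set.Icc 1 N) (ht : t ∈ Set.Icc 1 N) (h : Crosses i s j t) :
    arcPotential N i t + arcPotential N j s < arcPotential N i s + arcPotential N j t := by
  simp only [Set.mem_Icc] at hi hs hj ht
  have hI := h.map (f := ((↑) : ℕ → ℤ)) (S := Set.univ) (Nat.strictMono_cast.strictMonoOn _)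
    trivial trivial trivial trivial
  push_cast at hI
  exact hI.exchange_gapWeight_lt (by simp; omega) (by simp; omega) (by simp; omega)
    (by simp; omega)

/-- Uncrossing two arcs does not increase the total arc length, and when it keeps it, it makes
the arcs more unequal; both strictly decrease this potential. -/
def nestingPotential (N : ℕ) (σ : ℕ → ℕ) : ℤ := ∑ k ∈ Icc 1 N, arcPotential N k (σ k)

theorem nestingPotential_nonneg {N : ℕ} {σ : ℕ → ℕ}
    (hσ : Set.MapsTo σ (Set.Icc 1 N) (Set.Icc 1 N)) : 0 ≤ nestingPotential N σ := by
  refine sum_nonneg fun k hk => ?_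
  have hσk := hσ (Finset.mem_Icc.1 hk)
  simp only [Finset.mem_Icc, Set.mem_Icc] at hk hσk
  exact mul_nonneg (abs_nonneg _) (by rw [sub_nonneg, abs_le]; constructor <;> omega)

theorem le_sum_of_nonCrossing {N : ℕ} {w : ℕ → ℕ → ℝ} {B : ℝ}
    (hw : ∀ i s j t, i ∈ Set.Icc 1 N → s ∈ Set.Icc 1 N → j ∈ Set.Icc 1 N → t ∈ Set.Icc 1 N →
      Crosses i s j t → w i t + w j s ≤ w i s + w j t)
    (hB : ∀ σ, Set.BijOn σ (Set.Icc 1 N) (Set.Icc 1 N) → NonCrossing σ (Set.Icc 1 N) →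
      B ≤ ∑ k ∈ Icc 1 N, w k (σ k))
    {σ : ℕ → ℕ} (hσ : Set.BijOn σ (Set.Icc 1 N) (Set.Icc 1 N)) :
    B ≤ ∑ k ∈ Icc 1 N, w k (σ k) := by
  induction hn : (nestingPotential N σ).toNat using Nat.strong_induction_on generalizing σ with
  | _ n ih =>
  by_cases hnc : NonCrossing σ (Set.Icc 1 N)
  · exact hB σ hσ hnc
  obtain ⟨i, hi, j, hj, hcross⟩ :
      ∃ i ∈ Set.Icc 1 N, ∃ j ∈ Set.Icc 1 N, Crosses i (σ i) j (σ j) := by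
    simpa only [NonCrossing, not_forall, not_not, exists_prop] using hnc
  have hij : i ≠ j := by
    rintro rfl
    exact lt_irrefl _ hcross.1
  have hσ' : Set.BijOn (σ ∘ Equiv.swap i j) (Set.Icc 1 N) (Set.Icc 1 N) :=
    hσ.comp (Equiv.bijOn_swap hi hj)
  have hdecrease : nestingPotential N (σ ∘ Equiv.swap i j) < nestingPotential N σ := by
    have hswap := sum_comp_swap_add (Finset.mem_Icc.2 hi) (Finset.mem_Icc.2 hj) hij
      (arcPotential N) σ
    have hexch := hcross.arcPotential_exchange_lt hi (hσ.mapsTo hi) hj (hσ.mapsTo hj)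
    simp only [nestingPotential, Function.comp_apply]
    linarith
  have hswap := sum_comp_swap_add (Finset.mem_Icc.2 hi) (Finset.mem_Icc.2 hj) hij w σ
  have hexch := hw _ _ _ _ hi (hσ.mapsTo hi) hj (hσ.mapsTo hj) hcross
  calc B ≤ ∑ k ∈ Icc 1 N, w k ((σ ∘ Equiv.swap i j) k) := by
        refine ih _ ?_ hσ' rfl
        rw [← hn, Int.toNat_lt_toNat ((nestingPotential_nonneg hσ'.mapsTo).trans_lt hdecrease)]
        exact hdecrease
    _ ≤ ∑ k ∈ Icc 1 N, w k (σ k) := by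
        simp only [Function.comp_apply]
        linarith

theorem NonCrossing.bijOn_split {σ : ℕ → ℕ} {a b : ℕ}
    (hσ : Set.BijOn σ (Set.Ico a (b + 1)) (Set.Ico a (b + 1)))
    (hnc : NonCrossing σ (Set.Ico a (b + 1))) (hab : a ≤ b) (hσa : σ a < b) :
    Set.BijOn σ (Set.Ico a (σ a + 1)) (Set.Ico a (σ a + 1)) ∧
      Set.BijOn σ (Set.Ico (σ a + 1) (b + 1)) (Set.Ico (σ a + 1) (b + 1)) := by
  have ha : a ∈ Set.Ico a (b + 1) := ⟨le_rfl, by omega⟩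
  have hσa₁ : a ≤ σ a := (hσ.mapsTo ha).1
  have hsub₁ : Set.Ico a (σ a + 1) ⊆ Set.Ico a (b + 1) := Set.Ico_subset_Ico_right (by omega)
  have hsub₂ : Set.Ico (σ a + 1) (b + 1) ⊆ Set.Ico a (b + 1) := Set.Ico_subset_Ico_left (by omega)
  have hmaps₁ : Set.MapsTo σ (Set.Ico a (σ a + 1)) (Set.Ico a (σ a + 1)) := fun x hx => by
    obtain rfl | hxa := eq_or_ne x a
    · exact ⟨hσa₁, Nat.lt_succ_self _⟩
    have hσx : σ x ∈ Set.Ico a (b + 1) := hσ.mapsTo (hsub₁ hx)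
    have hx_cross := hnc a ha x (hsub₁ hx)
    simp only [Crosses, Interleaved, Set.mem_Ico] at hx hσx hx_cross ⊢
    omega
  have hmaps₂ : Set.MapsTo σ (Set.Ico (σ a + 1) (b + 1)) (Set.Ico (σ a + 1) (b + 1)) :=
    fun x hx => by
      have hσx : σ x ∈ Set.Ico a (b + 1) := hσ.mapsTo (hsub₂ hx)
      have hx_cross := hnc a ha x (hsub₂ hx)
      have hx_inj : σ x = σ a → x = a := hσ.injOn (hsub₂ hx) ha
      simp only [Crosses, Interleaved, Set.mem_Ico] at hx hσx hx_cross ⊢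
      omega
  rw [← Set.Ico_union_Ico_eq_Ico (b := σ a + 1) (by omega) (by omega)] at hσ
  have hdisj := Set.Ico_disjoint_Ico_same (a := a) (b := σ a + 1) (c := b + 1)
  exact ⟨hσ.of_union_left hmaps₁ hmaps₂ hdisj, hσ.of_union_right hmaps₁ hmaps₂ hdisj⟩

theorem NonCrossing.bijOn_split_shifted {τ : ℕ → ℕ} {a b j : ℕ}
    (hτ : Set.BijOn τ (Set.Ico (a + 1) (b + 1)) (Set.Ico a b))
    (hnc : NonCrossing τ (Set.Ico (a + 1) (b + 1))) (hj : j ∈ Set.Ico (a + 1) (b + 1))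
    (hja : τ j = a) :
    Set.BijOn τ (Set.Ico (a + 1) j) (Set.Ico (a + 1) j) ∧
      Set.BijOn τ (Set.Ico (j + 1) (b + 1)) (Set.Ico j b) := by
  have hj₁ : a + 1 ≤ j := hj.1
  have hj₂ : j < b + 1 := hj.2
  have hcross : ∀ x ∈ Set.Ico (a + 1) (b + 1), ¬ Crosses j a x (τ x) := hja ▸ hnc j hj
  have hinj : ∀ x ∈ Set.Ico (a + 1) (b + 1), τ x = a → x = j :=
    fun x hx h => hτ.injOn hx hj (h.trans hja.symm)
  have hsub₁ : Set.Ico (a + 1) (j + 1) ⊆ Set.Ico (a + 1) (b + 1) := Set.Ico_subset_Ico_right hj₂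
  have hsub₂ : Set.Ico (j + 1) (b + 1) ⊆ Set.Ico (a + 1) (b + 1) :=
    Set.Ico_subset_Ico_left (by omega)
  have hmaps₁ : Set.MapsTo τ (Set.Ico (a + 1) (j + 1)) (Set.Ico a j) := fun x hx => by
    obtain rfl | hxj := eq_or_ne x j
    · exact ⟨hja.ge, by omega⟩
    have hτx : τ x ∈ Set.Ico a b := hτ.mapsTo (hsub₁ hx)
    have hx_cross := hcross x (hsub₁ hx)
    have hx_inj := hinj x (hsub₁ hx)
    simp only [Crosses, Interleaved, Set.mem_Ico] at hx hτx hx_cross hx_inj ⊢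
    omega
  have hmaps₂ : Set.MapsTo τ (Set.Ico (j + 1) (b + 1)) (Set.Ico j b) := fun x hx => by
    have hτx : τ x ∈ Set.Ico a b := hτ.mapsTo (hsub₂ hx)
    have hx_cross := hcross x (hsub₂ hx)
    have hx_inj := hinj x (hsub₂ hx)
    simp only [Crosses, Interleaved, Set.mem_Ico] at hx hτx hx_cross hx_inj ⊢
    omega
  rw [← Set.Ico_union_Ico_eq_Ico (show a + 1 ≤ j + 1 by omega) hj₂,
    ← Set.Ico_union_Ico_eq_Ico (show a ≤ j by omega) (show j ≤ b by omega)] at hτ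
  have hdisj := Set.Ico_disjoint_Ico_same (a := a) (b := j) (c := b)
  refine ⟨?_, hτ.of_union_right hmaps₁ hmaps₂ hdisj⟩
  convert (hτ.of_union_left hmaps₁ hmaps₂ hdisj).sdiff_singleton (a := j) ⟨hj₁, lt_add_one j⟩
    using 1 <;> ext x <;> simp only [hja, Set.mem_sdiff, Set.mem_Ico, Set.mem_singleton_iff] <;>
    omega

section Blocks

variable (w : ℕ → ℕ → ℝ)

/-- The matching `p i ↦ q i` is optimal among non-crossing matchings of the block
`p a < q a < ⋯ < p (b - 1) < q (b - 1)`. -/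
def DiagonalOptimal (a b : ℕ) : Prop :=
  ∀ σ : ℕ → ℕ, Set.BijOn σ (Set.Ico a b) (Set.Ico a b) → NonCrossing σ (Set.Ico a b) →
    ∑ i ∈ Ico a b, w i i ≤ ∑ i ∈ Ico a b, w i (σ i)

/-- The matching `p (i + 1) ↦ q i` is optimal among non-crossing matchings of the block
`q a < p (a + 1) < ⋯ < q (b - 1) < p b`. -/
def ShiftedOptimal (a b : ℕ) : Prop :=
  ∀ τ : ℕ → ℕ, Set.BijOn τ (Set.Ico (a + 1) (b + 1)) (Set.Ico a b) →
    NonCrossing τ (Set.Ico (a + 1) (b + 1)) →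
    ∑ i ∈ Ico a b, w (i + 1) i ≤ ∑ i ∈ Ico (a + 1) (b + 1), w i (τ i)

variable {w}

theorem DiagonalOptimal.of_shiftedOptimal {a b : ℕ} (hab : a ≤ b)
    (hP : ∑ i ∈ Ico a (b + 1), w i i ≤ w a b + ∑ i ∈ Ico a b, w (i + 1) i)
    (hsplit : ∀ m, a < m → m ≤ b → DiagonalOptimal w a m ∧ DiagonalOptimal w m (b + 1))
    (hshift : ShiftedOptimal w a b) : DiagonalOptimal w a (b + 1) := by
  intro σ hσ hnc
  obtain ⟨hσa₁, hσa₂⟩ : a ≤ σ a ∧ σ a < b + 1 := hσ.mapsTo ⟨le_rfl, by omega⟩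
  rcases eq_or_lt_of_le (Nat.lt_succ_iff.1 hσa₂) with hσab | hσab
  · have hrest : Set.BijOn σ (Set.Ico (a + 1) (b + 1)) (Set.Ico a b) := by
      convert hσ.sdiff_singleton (a := a) ⟨le_rfl, by omega⟩ using 1 <;> ext x <;>
        simp only [hσab, Set.mem_sdiff, Set.mem_Ico, Set.mem_singleton_iff] <;> omega
    have hrest_le := hshift σ hrest (hnc.mono (Set.Ico_subset_Ico_left (Nat.le_succ a)))
    rw [sum_eq_sum_Ico_succ_bot (by omega) (fun i => w i (σ i)), hσab]
    linarith
  · obtain ⟨hleft, hright⟩ := hnc.bijOn_split hσ hab hσab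
    obtain ⟨hdiag₁, hdiag₂⟩ := hsplit (σ a + 1) (by omega) (by omega)
    rw [← sum_Ico_consecutive _ (show a ≤ σ a + 1 by omega) (show σ a + 1 ≤ b + 1 by omega),
      ← sum_Ico_consecutive _ (show a ≤ σ a + 1 by omega) (show σ a + 1 ≤ b + 1 by omega)]
    exact add_le_add (hdiag₁ σ hleft (hnc.mono (Set.Ico_subset_Ico_right (by omega))))
      (hdiag₂ σ hright (hnc.mono (Set.Ico_subset_Ico_left (by omega))))

theorem ShiftedOptimal.of_diagonalOptimal {a b : ℕ} (hab : a < b)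
    (hQ : ∀ j ∈ Set.Ioc a b, ∑ i ∈ Ico a j, w (i + 1) i ≤ w j a + ∑ i ∈ Ico (a + 1) j, w i i)
    (hdiag : ∀ j ∈ Set.Ioc a b, DiagonalOptimal w (a + 1) j)
    (hshift : ∀ j ∈ Set.Ioc a b, ShiftedOptimal w j b) : ShiftedOptimal w a b := by
  intro τ hτ hnc
  obtain ⟨j, hj, hja⟩ := hτ.surjOn (show a ∈ Set.Ico a b from ⟨le_rfl, hab⟩)
  obtain ⟨hleft, hright⟩ := hnc.bijOn_split_shifted hτ hj hja
  obtain ⟨hj₁, hj₂⟩ : a + 1 ≤ j ∧ j < b + 1 := hj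
  have hjab : j ∈ Set.Ioc a b := ⟨by omega, by omega⟩
  have hQj := hQ j hjab
  have hleft_le := hdiag j hjab τ hleft (hnc.mono (Set.Ico_subset_Ico_right (by omega)))
  have hright_le := hshift j hjab τ hright (hnc.mono (Set.Ico_subset_Ico_left (by omega)))
  rw [← sum_Ico_consecutive (fun i => w (i + 1) i) (show a ≤ j by omega) (show j ≤ b by omega),
    ← sum_Ico_consecutive (fun i => w i (τ i)) hj₁ hj₂.le,
    sum_eq_sum_Ico_succ_bot hj₂ (fun i => w i (τ i)), hja]
  linarith

theorem diagonalOptimal_and_shiftedOptimal {N : ℕ}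
    (hP : ∀ a b, 1 ≤ a → a ≤ b → b ≤ N →
      ∑ i ∈ Ico a (b + 1), w i i ≤ w a b + ∑ i ∈ Ico a b, w (i + 1) i)
    (hQ : ∀ a b, 1 ≤ a → a < b → b ≤ N →
      ∑ i ∈ Ico a b, w (i + 1) i ≤ w b a + ∑ i ∈ Ico (a + 1) b, w i i)
    {a b : ℕ} (ha : 1 ≤ a) (hb : b ≤ N + 1) :
    DiagonalOptimal w a b ∧ (b ≤ N → ShiftedOptimal w a b) := by
  induction hn : b - a using Nat.strong_induction_on generalizing a b with
  | _ n ih =>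
  rcases le_or_gt b a with hba | hab
  · refine ⟨fun σ _ _ => ?_, fun _ τ _ _ => ?_⟩
    · simp [Finset.Ico_eq_empty_of_le hba]
    · simp [Finset.Ico_eq_empty_of_le hba, Finset.Ico_eq_empty_of_le (Nat.succ_le_succ hba)]
  refine ⟨?_, fun hbN => ShiftedOptimal.of_diagonalOptimal hab
    (fun j hj => hQ a j ha hj.1 (hj.2.trans hbN))
    (fun j ⟨_, _⟩ => (ih _ (by omega) (by omega) (by omega) rfl).1)
    (fun j ⟨_, _⟩ => (ih _ (by omega) (by omega) hb rfl).2 hbN)⟩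
  obtain ⟨b, rfl⟩ : ∃ b', b = b' + 1 := ⟨b - 1, by omega⟩
  exact DiagonalOptimal.of_shiftedOptimal (by omega) (hP a b ha (by omega) (by omega))
    (fun m _ _ => ⟨(ih _ (by omega) ha (by omega) rfl).1, (ih _ (by omega) (by omega) hb rfl).1⟩)
    ((ih _ (by omega) ha (by omega) rfl).2 (by omega))

end Blocks

theorem sum_diagonal_le_of_indicator_nonneg {N : ℕ} {w : ℕ → ℕ → ℝ} {Ip : ℕ → ℕ → ℝ}
    (hIp : ∀ k i, Ip k i = w i (i + k) + ∑ ℓ ∈ range k, w (i + ℓ + 1) (i + ℓ)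
      - ∑ ℓ ∈ range (k + 1), w (i + ℓ) (i + ℓ))
    (h1 : ∀ k i, 1 ≤ k → k ≤ N - 1 → 1 ≤ i → i ≤ N - k → 0 ≤ Ip k i)
    {a b : ℕ} (ha : 1 ≤ a) (hab : a ≤ b) (hb : b ≤ N) :
    ∑ i ∈ Ico a (b + 1), w i i ≤ w a b + ∑ i ∈ Ico a b, w (i + 1) i := by
  obtain ⟨k, rfl⟩ := Nat.exists_eq_add_of_le hab
  have hk : 0 ≤ Ip k a := by
    rcases Nat.eq_zero_or_pos k with rfl | hk
    · simp [hIp]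
    · exact h1 k a hk (by omega) ha (by omega)
  rw [hIp, Finset.sum_range_add_eq_sum_Ico (fun i => w (i + 1) i),
    Finset.sum_range_add_eq_sum_Ico (fun i => w i i), ← add_assoc] at hk
  linarith

theorem sum_shifted_le_of_indicator_nonneg {N : ℕ} {w : ℕ → ℕ → ℝ} {Iq : ℕ → ℕ → ℝ}
    (hIq : ∀ k i, Iq k i = w (i + k + 1) i + ∑ ℓ ∈ Icc 1 k, w (i + ℓ) (i + ℓ)
      - ∑ ℓ ∈ range (k + 1), w (i + ℓ + 1) (i + ℓ))
    (h2 : ∀ k i, 1 ≤ k → k ≤ N - 2 → 1 ≤ i → i ≤ N - k - 1 → 0 ≤ Iq k i)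
    {a b : ℕ} (ha : 1 ≤ a) (hab : a < b) (hb : b ≤ N) :
    ∑ i ∈ Ico a b, w (i + 1) i ≤ w b a + ∑ i ∈ Ico (a + 1) b, w i i := by
  obtain ⟨k, rfl⟩ : ∃ k, b = a + k + 1 := ⟨b - a - 1, by omega⟩
  have hk : 0 ≤ Iq k a := by
    rcases Nat.eq_zero_or_pos k with rfl | hk
    · simp [hIq]
    · exact h2 k a hk (by omega) ha (by omega)
  rw [hIq, ← Finset.Ico_add_one_right_eq_Icc, sum_Ico_add (fun i => w i i),
    Finset.sum_range_add_eq_sum_Ico (fun i => w (i + 1) i)] at hk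
  rw [show 1 + a = a + 1 by ring, show k + 1 + a = a + k + 1 by ring, ← add_assoc] at hk
  linarith

theorem stmt_13_general
    (N : ℕ)
    (p q : ℕ → ℝ)
    (hpq : ∀ i, 1 ≤ i → i ≤ N → p i < q i)
    (hqp : ∀ i, 1 ≤ i → i < N → q i < p (i + 1))
    (g : ℝ → ℝ)
    (hg : ConcaveOn ℝ Set.univ g)
    (hgmono : MonotoneOn g (Set.Ici 0))
    (c : ℝ → ℝ → ℝ)
    (hc : ∀ x y, c x y = g |x - y|)
    (C : (ℕ → ℕ) → ℝ)
    (hC : ∀ σ : ℕ → ℕ, C σ = ∑ i ∈ Finset.Icc 1 N, c (p i) (q (σ i)))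
    (Ip : ℕ → ℕ → ℝ)
    (hIp : ∀ k i, Ip k i =
      c (p i) (q (i + k))
      + ∑ ℓ ∈ Finset.range k, c (p (i + ℓ + 1)) (q (i + ℓ))
      - ∑ ℓ ∈ Finset.range (k + 1), c (p (i + ℓ)) (q (i + ℓ)))
    (Iq : ℕ → ℕ → ℝ)
    (hIq : ∀ k i, Iq k i =
      c (p (i + k + 1)) (q i)
      + ∑ ℓ ∈ Finset.Icc 1 k, c (p (i + ℓ)) (q (i + ℓ))
      - ∑ ℓ ∈ Finset.range (k + 1), c (p (i + ℓ + 1)) (q (i + ℓ)))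
    (h1 : ∀ k i, 1 ≤ k → k ≤ N - 1 → 1 ≤ i → i ≤ N - k → 0 ≤ Ip k i)
    (h2 : ∀ k i, 1 ≤ k → k ≤ N - 2 → 1 ≤ i → i ≤ N - k - 1 → 0 ≤ Iq k i)
    : ∀ σ : ℕ → ℕ, Set.BijOn σ (Set.Icc 1 N) (Set.Icc 1 N) →
      C (fun i => i) ≤ C σ := by
  intro σ hσ
  set w : ℕ → ℕ → ℝ := fun i j => c (p i) (q j)
  have hdiag := (diagonalOptimal_and_shiftedOptimal
    (fun a b ha hab hb => sum_diagonal_le_of_indicator_nonneg (w := w) hIp h1 ha hab hb)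
    (fun a b ha hab hb => sum_shifted_le_of_indicator_nonneg (w := w) hIq h2 ha hab hb)
    le_rfl le_rfl).1
  rw [DiagonalOptimal, Set.Ico_add_one_right_eq_Icc, Finset.Ico_add_one_right_eq_Icc] at hdiag
  rw [hC, hC]
  refine le_sum_of_nonCrossing (fun i s j t hi hs hj ht hcross => ?_) hdiag hσ
  simpa only [w, hc] using hcross.cost_exchange_le hpq hqp
    (hg.subset (Set.subset_univ _) (convex_Ici 0)) hgmono hi hs hj ht

theorem stmt_13
    (N : ℕ) (hN : 1 ≤ N)
    (p q : ℕ → ℝ)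
    (hpq : ∀ i, 1 ≤ i → i ≤ N → p i < q i)
    (hqp : ∀ i, 1 ≤ i → i < N → q i < p (i + 1))
    (g : ℝ → ℝ)
    (hg : ConcaveOn ℝ Set.univ g)
    (hgmono : MonotoneOn g (Set.Ici 0))
    (c : ℝ → ℝ → ℝ)
    (hc : ∀ x y, c x y = g |x - y|)
    (C : (ℕ → ℕ) → ℝ)
    (hC : ∀ σ : ℕ → ℕ, C σ = ∑ i ∈ Finset.Icc 1 N, c (p i) (q (σ i)))
    (Ip : ℕ → ℕ → ℝ)
    (hIp : ∀ k i, Ip k i =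
      c (p i) (q (i + k))
      + ∑ ℓ ∈ Finset.range k, c (p (i + ℓ + 1)) (q (i + ℓ))
      - ∑ ℓ ∈ Finset.range (k + 1), c (p (i + ℓ)) (q (i + ℓ)))
    (Iq : ℕ → ℕ → ℝ)
    (hIq : ∀ k i, Iq k i =
      c (p (i + k + 1)) (q i)
      + ∑ ℓ ∈ Finset.Icc 1 k, c (p (i + ℓ)) (q (i + ℓ))
      - ∑ ℓ ∈ Finset.range (k + 1), c (p (i + ℓ + 1)) (q (i + ℓ)))
    (h1 : ∀ k i, 1 ≤ k → k ≤ N - 1 → 1 ≤ i → i ≤ N - k → 0 ≤ Ip k i)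
    (h2 : ∀ k i, 1 ≤ k → k ≤ N - 2 → 1 ≤ i → i ≤ N - k - 1 → 0 ≤ Iq k i)
    : ∀ σ : ℕ → ℕ, Set.BijOn σ (Set.Icc 1 N) (Set.Icc 1 N) →
      C (fun i => i) ≤ C σ :=
  stmt_13_general N p q hpq hqp g hg hgmono c hc C hC Ip hIp Iq hIq h1 h2
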